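/- Let R be a reduced root system with base Π, and let S ⊆ Π. If K and K' are distinct elements of the cascade 𝒦(S), then ε_K and ε_{K'} are strongly orthogonal, i.e. neither ε_K + ε_{K'} nor ε_K − ε_{K'} is a root of R. -/

import Mathlib

open Finset Module

open scoped Classical

/-- A reduced crystallographic root system in the `k`-vector space `V`, recorded through
the finite set `roots` of roots, the coroot linear forms `corootForm α = ⟨·, α^∨⟩`, and
the integer Cartan pairing `pairInt β α = ⟨β, α^∨⟩ ∈ ℤ` (meaningful when `α, β` are roots). -/
structure RootSystemData (k V : Type*) [Field k] [CharZero k]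
    [AddCommGroup V] [Module k V] where
  /-- the (finite) set of roots -/
  roots : Finset V
  /-- `corootForm α` is the linear form `⟨·, α^∨⟩` associated to the coroot of a root `α` -/
  corootForm : V → V →ₗ[k] k
  /-- the integer `⟨β, α^∨⟩`, recorded as `pairInt β α` -/
  pairInt : V → V → ℤ
  ne_zero : ∀ α ∈ roots, α ≠ (0 : V)
  span_eq_top : Submodule.span k (roots : Set V) = ⊤
  pair_compat : ∀ α ∈ roots, ∀ β ∈ roots, ((pairInt β α : ℤ) : k) = corootForm α β
  pair_self : ∀ α ∈ roots, pairInt α α = 2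
  reflect_mem : ∀ α ∈ roots, ∀ β ∈ roots, β - pairInt β α • α ∈ roots
  reduced : ∀ α ∈ roots, ∀ c : k, c • α ∈ roots → c = 1 ∨ c = -1

namespace RootSystemData

variable {k V : Type*} [Field k] [CharZero k] [AddCommGroup V] [Module k V]
variable (P : RootSystemData k V)

/-- A base (set of simple roots) of the root system: a linearly independent set of roots
such that every root is a nonnegative or nonpositive integral combination of its elements. -/
structure IsBase (B : Finset V) : Prop where
  subset : B ⊆ P.roots
  indep : LinearIndependent k (fun b : B => (b : V))
  pos_or_neg : ∀ α ∈ P.roots,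
    α ∈ AddSubmonoid.closure (B : Set V) ∨ -α ∈ AddSubmonoid.closure (B : Set V)

/-- The positive roots `R₊` with respect to a base `B`. -/
noncomputable def posRoots (B : Finset V) : Finset V :=
  P.roots.filter fun α => α ∈ AddSubmonoid.closure (B : Set V)

/-- `R^S = R ∩ ℤS`. -/
noncomputable def rootsOf (S : Finset V) : Finset V :=
  P.roots.filter fun α => α ∈ AddSubgroup.closure (S : Set V)

/-- `R₊^S = R ∩ ℕS`. -/
noncomputable def posRootsOf (S : Finset V) : Finset V :=
  P.roots.filter fun α => α ∈ AddSubmonoid.closure (S : Set V)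

/-- Two simple roots are linked in the Dynkin diagram of `S ⊆ Δ` when they can be joined
by a chain in `S` of consecutively non-orthogonal elements. -/
def Linked (S : Finset V) : V → V → Prop :=
  Relation.ReflTransGen fun a b => a ∈ S ∧ b ∈ S ∧ P.pairInt a b ≠ 0

/-- A subset of a base is connected if its Dynkin diagram is connected (and nonempty). -/
def IsConnected (S : Finset V) : Prop :=
  S.Nonempty ∧ ∀ a ∈ S, ∀ b ∈ S, P.Linked S a b

/-- `ε` is the highest root of `R^S`: a positive root of `R^S` such that `ε - α ∈ ℕS`
for every root `α ∈ R^S`. -/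
def IsHighestRoot (S : Finset V) (ε : V) : Prop :=
  ε ∈ P.posRootsOf S ∧ ∀ α ∈ P.rootsOf S, ε - α ∈ AddSubmonoid.closure (S : Set V)

/-- The highest root `ε_S` of `R^S` (junk value `0` if it does not exist). -/
noncomputable def highestRoot (S : Finset V) : V :=
  if h : ∃ ε, P.IsHighestRoot S ε then h.choose else 0

/-- The connected component of `a` in the Dynkin diagram of `S`. -/
noncomputable def component (S : Finset V) (a : V) : Finset V :=
  S.filter fun b => P.Linked S a b

/-- The connected components of the Dynkin diagram of `S`. -/
noncomputable def components (S : Finset V) : Finset (Finset V) :=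
  S.image fun a => P.component S a

/-- `{α ∈ S : ⟨α, ε_S^∨⟩ = 0}`. -/
noncomputable def zeroPart (S : Finset V) : Finset V :=
  S.filter fun a => P.pairInt a (P.highestRoot S) = 0

/-- Fuel-based auxiliary recursion for the cascade `𝒦(S)`; for an actual root system the
recursion terminates in at most `card S` steps, so fuel `card S + 1` computes `𝒦(S)`. -/
noncomputable def cascadeAux : ℕ → Finset V → Finset (Finset V)
  | 0, _ => ∅
  | n + 1, S => (P.components S).biUnion fun C => insert C (cascadeAux n (P.zeroPart C))

/-- The cascade `𝒦(S)`, defined recursively by `𝒦(∅) = ∅`,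
`𝒦(S) = 𝒦(S₁) ∪ ⋯ ∪ 𝒦(S_r)` if `S` has connected components `S₁, …, S_r`, and
`𝒦(S) = {S} ∪ 𝒦({α ∈ S : ⟨α, ε_S^∨⟩ = 0})` if `S` is connected. -/
noncomputable def cascade (S : Finset V) : Finset (Finset V) :=
  P.cascadeAux (S.card + 1) S

/-- `Γ^K = {α ∈ R^K : ⟨α, ε_K^∨⟩ > 0}`. -/
noncomputable def gamma (K : Finset V) : Finset V :=
  (P.rootsOf K).filter fun α => 0 < P.pairInt α (P.highestRoot K)

end RootSystemData

/-!
For connected `C ⊆ Π` order `R₊^C` by `γ ≤ δ ↔ δ - γ ∈ ℕC`. A maximal element `γ` pairs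
nonnegatively with every `a ∈ C` (else `γ + a` is a larger root); since distinct simple roots
pair nonpositively and `C` is connected, all coefficients of `γ` on `C` are then positive. Hence
two maximal elements `γ ≠ β` satisfy `⟨γ, β^∨⟩ > 0`, so `γ - β` is a root of `R^C`, lying in `ℕC`
or in `-ℕC`, against the maximality of `β` or of `γ`. The maximal element is therefore unique,
and it is the highest root `ε_C`.

Let `K ≠ K'` lie in the cascade. Either they lie in distinct components of some stage, which are
disjoint and mutually orthogonal, and `ε_K - ε_{K'}` has coefficients of both signs; or, up to
swapping, `K' ⊆ {a ∈ K : ⟨a, ε_K^∨⟩ = 0}`, and `ε_K + ε_{K'}` is not a root because `ε_K` is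
highest. In both cases `⟨ε_{K'}, ε_K^∨⟩ = 0`, so the reflection in `ε_K` maps `ε_K ± ε_{K'}` to
`-(ε_K ∓ ε_{K'})`, and neither is a root.
-/

lemma AddSubgroup.exists_sub_of_mem_closure {G : Type*} [AddCommGroup G] {s : Set G} {x : G}
    (hx : x ∈ AddSubgroup.closure s) :
    ∃ p ∈ AddSubmonoid.closure s, ∃ n ∈ AddSubmonoid.closure s, x = p - n := by
  induction hx using AddSubgroup.closure_induction with
  | mem x hx => exact ⟨x, AddSubmonoid.subset_closure hx, 0, zero_mem _, (sub_zero x).symm⟩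
  | zero => exact ⟨0, zero_mem _, 0, zero_mem _, (sub_zero 0).symm⟩
  | add x y _ _ hx hy =>
    obtain ⟨p, hp, n, hn, rfl⟩ := hx
    obtain ⟨p', hp', n', hn', rfl⟩ := hy
    exact ⟨p + p', add_mem hp hp', n + n', add_mem hn hn', by abel⟩
  | neg x _ hx =>
    obtain ⟨p, hp, n, hn, rfl⟩ := hx
    exact ⟨n, hn, p, hp, neg_sub p n⟩

lemma Finset.exists_rel_maximal {α : Type*} {r : α → α → Prop} (hrefl : ∀ a, r a a)
    (htrans : ∀ a b c, r a b → r b c → r a c) (s : Finset α) {a : α} (ha : a ∈ s) :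
    ∃ b ∈ s, r a b ∧ ∀ c ∈ s, r b c → r c b := by
  let _ : Preorder α := { le := r, le_refl := hrefl, le_trans := htrans }
  obtain ⟨b, hab, hb, hmax⟩ := s.exists_le_maximal ha
  exact ⟨b, hb, hab, fun c hc => hmax hc⟩

namespace RootSystemData

variable {k V : Type*} [Field k] [CharZero k] [AddCommGroup V] [Module k V]
variable {P : RootSystemData k V} {Δ S A B C T K K' : Finset V} {α β γ x y : V}

lemma moduleFinite (P : RootSystemData k V) : Module.Finite k V :=
  ⟨P.span_eq_top ▸ Submodule.fg_span P.roots.finite_toSet⟩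

lemma corootForm_self (hα : α ∈ P.roots) : P.corootForm α α = 2 := by
  rw [← P.pair_compat α hα α hα, P.pair_self α hα, Int.cast_ofNat]

lemma mapsTo_preReflection (hα : α ∈ P.roots) :
    Set.MapsTo (Module.preReflection α (P.corootForm α)) P.roots P.roots := by
  intro β hβ
  rw [Module.preReflection_apply, ← P.pair_compat α hα β hβ, Int.cast_smul_eq_zsmul]
  exact P.reflect_mem α hα β hβ

lemma injOn_corootForm : Set.InjOn P.corootForm P.roots := fun _ hα _ hβ h =>
  have : IsAddTorsionFree V := .of_isTorsionFree k V
  Module.eq_of_mapsTo_reflection_of_mem P.roots.finite_toSet (corootForm_self hα)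
    (corootForm_self hβ) (h ▸ corootForm_self hα) (h ▸ corootForm_self hβ)
    (mapsTo_preReflection hα) (h ▸ mapsTo_preReflection hβ) hβ

variable (P) in
noncomputable def rootPairing : RootPairing P.roots k V (Module.Dual k V) :=
  haveI := P.moduleFinite
  RootPairing.mk'' (Module.Dual.eval k V) (Function.Embedding.subtype _)
    ⟨fun α => P.corootForm α, fun α β h => Subtype.ext (injOn_corootForm α.2 β.2 h)⟩
    (fun α => corootForm_self α.2) (fun α => by
      rintro - ⟨β, rfl⟩
      exact ⟨⟨_, mapsTo_preReflection α.2 β.2⟩, rfl⟩)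
    (by simpa using P.span_eq_top)

lemma rootPairing_pairing (α β : P.roots) : P.rootPairing.pairing α β = P.pairInt α β :=
  (P.pair_compat β β.2 α α.2).symm

instance : P.rootPairing.IsCrystallographic :=
  ⟨fun α β => ⟨P.pairInt α β, (rootPairing_pairing α β).symm⟩⟩

lemma rootPairing_pairingIn (α β : P.roots) :
    P.rootPairing.pairingIn ℤ α β = P.pairInt α β :=
  Int.cast_injective (α := k) <| by
    rw [← rootPairing_pairing, ← P.rootPairing.algebraMap_pairingIn ℤ, algebraMap_int_eq,
      eq_intCast]

lemma pairInt_eq_zero_comm (hα : α ∈ P.roots) (hβ : β ∈ P.roots) :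
    P.pairInt α β = 0 ↔ P.pairInt β α = 0 := by
  simpa only [rootPairing_pairingIn] using
    P.rootPairing.pairingIn_eq_zero_iff (S := ℤ) (i := ⟨α, hα⟩) (j := ⟨β, hβ⟩)

lemma pairInt_nonneg_comm (hα : α ∈ P.roots) (hβ : β ∈ P.roots) :
    0 ≤ P.pairInt α β ↔ 0 ≤ P.pairInt β α := by
  simpa only [rootPairing_pairingIn, not_lt] using
    (P.rootPairing.pairingIn_lt_zero_iff ℤ (i := ⟨α, hα⟩) (j := ⟨β, hβ⟩)).not

lemma add_mem_roots_of_pairInt_neg (hα : α ∈ P.roots) (hβ : β ∈ P.roots)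
    (h : P.pairInt α β < 0) (hne : α ≠ -β) : α + β ∈ P.roots := by
  rw [← rootPairing_pairingIn ⟨α, hα⟩ ⟨β, hβ⟩] at h
  obtain ⟨γ, hγ⟩ := P.rootPairing.root_add_root_mem_of_pairingIn_neg h hne
  exact (show (γ : V) = α + β from hγ) ▸ γ.2

lemma sub_mem_roots_of_pairInt_pos (hα : α ∈ P.roots) (hβ : β ∈ P.roots)
    (h : 0 < P.pairInt α β) (hne : α ≠ β) : α - β ∈ P.roots := by
  rw [← rootPairing_pairingIn ⟨α, hα⟩ ⟨β, hβ⟩] at h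
  obtain ⟨γ, hγ⟩ := P.rootPairing.root_sub_root_mem_of_pairingIn_pos h
    (fun h' => hne congr(Subtype.val $h'))
  exact (show (γ : V) = α - β from hγ) ▸ γ.2

lemma neg_mem_roots (hα : α ∈ P.roots) : -α ∈ P.roots := by
  simpa [P.pair_self α hα, two_zsmul] using P.reflect_mem α hα α hα

lemma pairInt_eq_sum_nsmul (hS : S ⊆ P.roots) (hβ : β ∈ P.roots) (hγ : γ ∈ P.roots)
    {m : V → ℕ} (hm : ∑ a ∈ S, m a • a = γ) :
    P.pairInt γ β = ∑ a ∈ S, m a * P.pairInt a β :=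
  Int.cast_injective (α := k) <| by
    push_cast
    rw [P.pair_compat β hβ γ hγ, ← hm, map_sum]
    refine Finset.sum_congr rfl fun a ha => ?_
    rw [map_nsmul, nsmul_eq_mul, P.pair_compat β hβ a (hS ha)]

lemma pairInt_eq_zero_of_mem_closure (hS : S ⊆ P.roots) (hβ : β ∈ P.roots) (hγ : γ ∈ P.roots)
    (hγS : γ ∈ AddSubmonoid.closure (S : Set V)) (h : ∀ a ∈ S, P.pairInt a β = 0) :
    P.pairInt γ β = 0 := by
  obtain ⟨m, -, hm⟩ := AddSubmonoid.mem_closure_finset.mp hγS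
  rw [pairInt_eq_sum_nsmul hS hβ hγ hm]
  exact Finset.sum_eq_zero fun a ha => by rw [h a ha, mul_zero]

lemma add_mem_roots_iff_sub_mem_roots (hα : α ∈ P.roots) (hβ : β ∈ P.roots)
    (h : P.pairInt β α = 0) : α + β ∈ P.roots ↔ α - β ∈ P.roots := by
  have hβα : P.corootForm α β = 0 := by rw [← P.pair_compat α hα β hβ, h, Int.cast_zero]
  have hs {γ : V} (hγ : γ ∈ P.roots) : -Module.preReflection α (P.corootForm α) γ ∈ P.roots :=
    neg_mem_roots (mapsTo_preReflection hα hγ)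
  constructor
  · intro hadd
    convert hs hadd using 1
    simp only [Module.preReflection_apply, map_add, corootForm_self hα, hβα]
    module
  · intro hsub
    convert hs hsub using 1
    simp only [Module.preReflection_apply, map_sub, corootForm_self hα, hβα]
    module

variable (P) in
def StronglyOrthogonal (α β : V) : Prop :=
  α + β ∉ P.roots ∧ α - β ∉ P.roots

lemma StronglyOrthogonal.symm (h : P.StronglyOrthogonal α β) : P.StronglyOrthogonal β α :=
  ⟨add_comm α β ▸ h.1, fun h' => h.2 (neg_sub β α ▸ neg_mem_roots h')⟩

lemma stronglyOrthogonal_iff_add_notMem (hα : α ∈ P.roots) (hβ : β ∈ P.roots)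
    (h : P.pairInt β α = 0) : P.StronglyOrthogonal α β ↔ α + β ∉ P.roots :=
  ⟨And.left, fun hadd => ⟨hadd, (add_mem_roots_iff_sub_mem_roots hα hβ h).not.mp hadd⟩⟩

lemma stronglyOrthogonal_iff_sub_notMem (hα : α ∈ P.roots) (hβ : β ∈ P.roots)
    (h : P.pairInt β α = 0) : P.StronglyOrthogonal α β ↔ α - β ∉ P.roots :=
  (stronglyOrthogonal_iff_add_notMem hα hβ h).trans (add_mem_roots_iff_sub_mem_roots hα hβ h).not

lemma exists_sum_nsmul_eq_of_mem_closure (hS : S ⊆ Δ)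
    (hx : x ∈ AddSubmonoid.closure (S : Set V)) :
    ∃ m : V → ℕ, m.support ⊆ S ∧ ∑ a ∈ Δ, m a • a = x := by
  obtain ⟨m, hm, rfl⟩ := AddSubmonoid.mem_closure_finset.mp hx
  refine ⟨m, hm, (Finset.sum_subset hS fun a _ ha => ?_).symm⟩
  rw [Function.notMem_support.mp fun h => ha (hm h), zero_smul]

namespace IsBase

lemma linearIndepOn_nat (hb : P.IsBase Δ) : LinearIndepOn ℕ id (Δ : Set V) :=
  hb.indep.restrict_scalars' ℕ

lemma eq_of_sum_nsmul_eq (hb : P.IsBase Δ) {m n : V → ℕ}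
    (h : ∑ a ∈ Δ, m a • a = ∑ a ∈ Δ, n a • a) : ∀ a ∈ Δ, m a = n a :=
  linearIndepOn_finset_iffₛ.mp hb.linearIndepOn_nat m n h

lemma mem_closure_of_add_mem_closure (hb : P.IsBase Δ) (hS : S ⊆ Δ)
    (hx : x ∈ AddSubmonoid.closure (Δ : Set V)) (hy : y ∈ AddSubmonoid.closure (Δ : Set V))
    (hxy : x + y ∈ AddSubmonoid.closure (S : Set V)) : x ∈ AddSubmonoid.closure (S : Set V) := by
  obtain ⟨f, -, rfl⟩ := exists_sum_nsmul_eq_of_mem_closure subset_rfl hx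
  obtain ⟨g, -, rfl⟩ := exists_sum_nsmul_eq_of_mem_closure subset_rfl hy
  obtain ⟨h, hhS, hh⟩ := exists_sum_nsmul_eq_of_mem_closure hS hxy
  have hfgh := hb.eq_of_sum_nsmul_eq (m := f + g) (n := h) (by
    simp only [Pi.add_apply, add_smul, Finset.sum_add_distrib, hh])
  refine AddSubmonoid.sum_mem _ fun a ha => ?_
  by_cases haS : a ∈ S
  · exact nsmul_mem (AddSubmonoid.subset_closure haS) _
  · have hha : h a = 0 := Function.notMem_support.mp fun h' => haS (hhS h')
    obtain ⟨hfa, -⟩ : f a = 0 ∧ g a = 0 := by simpa [hha] using hfgh a ha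
    rw [hfa, zero_smul]
    exact zero_mem _

lemma eq_zero_of_mem_closure_of_neg_mem_closure (hb : P.IsBase Δ) (hS : S ⊆ Δ)
    (hx : x ∈ AddSubmonoid.closure (S : Set V)) (hnx : -x ∈ AddSubmonoid.closure (S : Set V)) :
    x = 0 := by
  have hclS := AddSubmonoid.closure_mono (Finset.coe_subset.mpr hS)
  simpa using hb.mem_closure_of_add_mem_closure (Finset.empty_subset Δ) (hclS hx) (hclS hnx)
    (by rw [add_neg_cancel]; exact zero_mem _)

lemma eq_zero_of_sub_mem_closure (hb : P.IsBase Δ) (hA : A ⊆ Δ) (hB : B ⊆ Δ)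
    (hAB : Disjoint A B) (hx : x ∈ AddSubmonoid.closure (A : Set V))
    (hy : y ∈ AddSubmonoid.closure (B : Set V))
    (hxy : x - y ∈ AddSubmonoid.closure (Δ : Set V)) : y = 0 := by
  have hyA := hb.mem_closure_of_add_mem_closure hA
    (AddSubmonoid.closure_mono (Finset.coe_subset.mpr hB) hy) hxy (by rwa [add_sub_cancel])
  obtain ⟨m, hmA, hm⟩ := exists_sum_nsmul_eq_of_mem_closure hA hyA
  obtain ⟨n, hnB, hn⟩ := exists_sum_nsmul_eq_of_mem_closure hB hy
  have hmn := hb.eq_of_sum_nsmul_eq (hm.trans hn.symm)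
  rw [← hm]
  refine Finset.sum_eq_zero fun a ha => ?_
  by_cases haA : a ∈ A
  · rw [hmn a ha, Function.notMem_support.mp fun h => Finset.disjoint_left.mp hAB haA (hnB h),
      zero_smul]
  · rw [Function.notMem_support.mp fun h => haA (hmA h), zero_smul]

lemma sub_notMem_roots (hb : P.IsBase Δ) (hA : A ⊆ Δ) (hB : B ⊆ Δ) (hAB : Disjoint A B)
    (hx : x ∈ AddSubmonoid.closure (A : Set V)) (hy : y ∈ AddSubmonoid.closure (B : Set V))
    (hx0 : x ≠ 0) (hy0 : y ≠ 0) : x - y ∉ P.roots := fun hxy =>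
  (hb.pos_or_neg _ hxy).elim (fun h => hy0 (hb.eq_zero_of_sub_mem_closure hA hB hAB hx hy h))
    fun h => hx0 (hb.eq_zero_of_sub_mem_closure hB hA hAB.symm hy hx (neg_sub x y ▸ h))

lemma pairInt_nonpos (hb : P.IsBase Δ) (hα : α ∈ Δ) (hβ : β ∈ Δ) (hne : α ≠ β) :
    P.pairInt α β ≤ 0 :=
  not_lt.mp fun h => hb.sub_notMem_roots (A := {α}) (B := {β}) (by simpa using hα)
    (by simpa using hβ) (by simpa using hne) (AddSubmonoid.subset_closure (by simp))
    (AddSubmonoid.subset_closure (by simp)) (P.ne_zero α (hb.subset hα))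
    (P.ne_zero β (hb.subset hβ)) (sub_mem_roots_of_pairInt_pos (hb.subset hα) (hb.subset hβ) h hne)

lemma mem_closure_or_neg_mem_closure (hb : P.IsBase Δ) (hS : S ⊆ Δ) (hα : α ∈ P.rootsOf S) :
    α ∈ AddSubmonoid.closure (S : Set V) ∨ -α ∈ AddSubmonoid.closure (S : Set V) := by
  obtain ⟨hαR, hαS⟩ := Finset.mem_filter.mp hα
  obtain ⟨p, hp, n, hn, rfl⟩ := AddSubgroup.exists_sub_of_mem_closure hαS
  have hclS := AddSubmonoid.closure_mono (Finset.coe_subset.mpr hS)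
  refine (hb.pos_or_neg _ hαR).imp (fun h => ?_) fun h => ?_
  · exact hb.mem_closure_of_add_mem_closure hS h (hclS hn) (by rwa [sub_add_cancel])
  · exact hb.mem_closure_of_add_mem_closure hS h (hclS hp) (by rwa [neg_sub, sub_add_cancel])

end IsBase

lemma linked_symm (hT : T ⊆ P.roots) (h : P.Linked T α β) : P.Linked T β α := by
  induction h with
  | refl => exact .refl
  | tail _ hγδ ih =>
    obtain ⟨hγ, hδ, hγδ⟩ := hγδ
    exact ih.head ⟨hδ, hγ, (pairInt_eq_zero_comm (hT hδ) (hT hγ)).not.mpr hγδ⟩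

lemma mem_component : β ∈ P.component T α ↔ β ∈ T ∧ P.Linked T α β := Finset.mem_filter

lemma component_eq_of_linked (hT : T ⊆ P.roots) (h : P.Linked T α β) :
    P.component T α = P.component T β := by
  ext γ
  simp only [mem_component]
  exact and_congr_right fun _ => ⟨(linked_symm hT h).trans, h.trans⟩

lemma subset_of_mem_components (hC : C ∈ P.components T) : C ⊆ T := by
  obtain ⟨x, -, rfl⟩ := Finset.mem_image.mp hC
  exact Finset.filter_subset _ _

lemma pairInt_eq_zero_of_mem_components (hT : T ⊆ P.roots) (hC : C ∈ P.components T)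
    (hC' : C' ∈ P.components T) (hne : C ≠ C') (hα : α ∈ C) (hβ : β ∈ C') :
    P.pairInt α β = 0 := by
  obtain ⟨x, -, rfl⟩ := Finset.mem_image.mp hC
  obtain ⟨x', -, rfl⟩ := Finset.mem_image.mp hC'
  obtain ⟨hαT, hxα⟩ := mem_component.mp hα
  obtain ⟨hβT, hx'β⟩ := mem_component.mp hβ
  by_contra hαβ
  exact hne (component_eq_of_linked hT ((hxα.tail ⟨hαT, hβT, hαβ⟩).trans (linked_symm hT hx'β)))

lemma disjoint_of_mem_components (hT : T ⊆ P.roots) (hC : C ∈ P.components T)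
    (hC' : C' ∈ P.components T) (hne : C ≠ C') : Disjoint C C' := by
  obtain ⟨x, -, rfl⟩ := Finset.mem_image.mp hC
  obtain ⟨x', -, rfl⟩ := Finset.mem_image.mp hC'
  refine Finset.disjoint_left.mpr fun α hα hα' => hne (component_eq_of_linked hT ?_)
  exact (mem_component.mp hα).2.trans (linked_symm hT (mem_component.mp hα').2)

lemma linked_component_of_linked (hα : α ∈ P.component T x) (h : P.Linked T α β) :
    β ∈ P.component T x ∧ P.Linked (P.component T x) α β := by
  induction h with
  | refl => exact ⟨hα, .refl⟩
  | @tail γ δ _ hγδ ih =>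
    obtain ⟨hγ, hδ, hγδ⟩ := hγδ
    have hδC : δ ∈ P.component T x :=
      mem_component.mpr ⟨hδ, (mem_component.mp ih.1).2.tail ⟨hγ, hδ, hγδ⟩⟩
    exact ⟨hδC, ih.2.tail ⟨ih.1, hδC, hγδ⟩⟩

lemma isConnected_of_mem_components (hT : T ⊆ P.roots) (hC : C ∈ P.components T) :
    P.IsConnected C := by
  obtain ⟨x, hx, rfl⟩ := Finset.mem_image.mp hC
  refine ⟨⟨x, mem_component.mpr ⟨hx, .refl⟩⟩, fun α hα β hβ => ?_⟩
  exact (linked_component_of_linked hα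
    ((linked_symm hT (mem_component.mp hα).2).trans (mem_component.mp hβ).2)).2

lemma coeff_pos_of_pairInt_nonneg (hb : P.IsBase Δ) (hCΔ : C ⊆ Δ) (hC : P.IsConnected C)
    (hγ : γ ∈ P.roots) {m : V → ℕ} (hm : ∑ a ∈ C, m a • a = γ)
    (hdom : ∀ a ∈ C, 0 ≤ P.pairInt γ a) : ∀ a ∈ C, 0 < m a := by
  have hCR : C ⊆ P.roots := hCΔ.trans hb.subset
  obtain ⟨w, hwC, hw⟩ : ∃ w ∈ C, 0 < m w := by
    by_contra! h
    refine P.ne_zero _ hγ (hm ▸ Finset.sum_eq_zero fun a ha => ?_)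
    rw [Nat.le_zero.mp (h a ha), zero_smul]
  -- if `m c > 0 = m d` along an edge `c — d`, then every term of `⟨γ, d^∨⟩` is `≤ 0`, one `< 0`
  have step : ∀ c d, c ∈ C ∧ d ∈ C ∧ P.pairInt c d ≠ 0 → 0 < m c → 0 < m d := by
    rintro c d ⟨hc, hd, hcd⟩ hmc
    by_contra! hmd
    have hne : c ≠ d := by rintro rfl; omega
    refine (hdom d hd).not_gt ?_
    rw [pairInt_eq_sum_nsmul hCR (hCR hd) hγ hm]
    refine Finset.sum_neg' (fun b hbC => ?_) ⟨c, hc, ?_⟩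
    · rcases eq_or_ne b d with rfl | hbd
      · simp [Nat.le_zero.mp hmd]
      · exact mul_nonpos_of_nonneg_of_nonpos (by positivity)
          (hb.pairInt_nonpos (hCΔ hbC) (hCΔ hd) hbd)
    · exact mul_neg_of_pos_of_neg (by exact_mod_cast hmc)
        (lt_of_le_of_ne (hb.pairInt_nonpos (hCΔ hc) (hCΔ hd) hne) hcd)
  intro a ha
  induction hC.2 w hwC a ha with
  | refl => exact hw
  | tail _ hcd ih => exact step _ _ hcd (ih hcd.1)

variable (P) in
def IsMaximalPosRoot (C : Finset V) (γ : V) : Prop :=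
  γ ∈ P.posRootsOf C ∧ ∀ δ ∈ P.posRootsOf C,
    δ - γ ∈ AddSubmonoid.closure (C : Set V) → γ - δ ∈ AddSubmonoid.closure (C : Set V)

lemma IsMaximalPosRoot.pairInt_nonneg (hb : P.IsBase Δ) (hCΔ : C ⊆ Δ)
    (hγ : P.IsMaximalPosRoot C γ) (ha : α ∈ C) : 0 ≤ P.pairInt γ α := by
  obtain ⟨⟨hγR, hγC⟩, hmax⟩ := hγ.imp_left Finset.mem_filter.mp
  have hαR := hb.subset (hCΔ ha)
  have hαC : α ∈ AddSubmonoid.closure (C : Set V) := AddSubmonoid.subset_closure ha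
  by_contra! h
  have hne : γ ≠ -α := by
    rintro rfl
    exact P.ne_zero α hαR (neg_eq_zero.mp (hb.eq_zero_of_mem_closure_of_neg_mem_closure hCΔ hγC
      (by rwa [neg_neg])))
  have hγα : γ + α ∈ P.posRootsOf C :=
    Finset.mem_filter.mpr ⟨add_mem_roots_of_pairInt_neg hγR hαR h hne, add_mem hγC hαC⟩
  have := hmax _ hγα (by rwa [add_sub_cancel_left])
  rw [sub_add_cancel_left] at this
  exact P.ne_zero α hαR (hb.eq_zero_of_mem_closure_of_neg_mem_closure hCΔ hαC this)

lemma IsMaximalPosRoot.eq (hb : P.IsBase Δ) (hCΔ : C ⊆ Δ) (hC : P.IsConnected C)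
    (hβ : P.IsMaximalPosRoot C β) (hγ : P.IsMaximalPosRoot C γ) : γ = β := by
  have hCR : C ⊆ P.roots := hCΔ.trans hb.subset
  obtain ⟨hβR, hβC⟩ := Finset.mem_filter.mp hβ.1
  obtain ⟨hγR, hγC⟩ := Finset.mem_filter.mp hγ.1
  obtain ⟨n, -, hn⟩ := AddSubmonoid.mem_closure_finset.mp hβC
  obtain ⟨m, -, hm⟩ := AddSubmonoid.mem_closure_finset.mp hγC
  have hβdom : ∀ a ∈ C, 0 ≤ P.pairInt a β := fun a ha =>
    (pairInt_nonneg_comm hβR (hCR ha)).mp (hβ.pairInt_nonneg hb hCΔ ha)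
  have hmpos := coeff_pos_of_pairInt_nonneg hb hCΔ hC hγR hm fun a ha =>
    hγ.pairInt_nonneg hb hCΔ ha
  -- otherwise `2 = ⟨β, β^∨⟩ = ∑ n a ⟨a, β^∨⟩ ≤ 0`
  obtain ⟨a₀, ha₀, hβa₀⟩ : ∃ a ∈ C, 0 < P.pairInt a β := by
    by_contra! h
    have h₁ := pairInt_eq_sum_nsmul hCR hβR hβR hn
    have h₂ : ∑ a ∈ C, (n a : ℤ) * P.pairInt a β ≤ 0 :=
      Finset.sum_nonpos fun a ha => mul_nonpos_of_nonneg_of_nonpos (by positivity) (h a ha)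
    have h₃ := P.pair_self β hβR
    omega
  have hγβ : 0 < P.pairInt γ β := by
    rw [pairInt_eq_sum_nsmul hCR hβR hγR hm]
    exact Finset.sum_pos' (fun a ha => mul_nonneg (by positivity) (hβdom a ha))
      ⟨a₀, ha₀, mul_pos (by exact_mod_cast hmpos a₀ ha₀) hβa₀⟩
  by_contra hne
  have hZ := AddSubmonoid.closure_le.mpr (AddSubgroup.subset_closure (k := (C : Set V)))
  have hdiff : γ - β ∈ P.rootsOf C := Finset.mem_filter.mpr
    ⟨sub_mem_roots_of_pairInt_pos hγR hβR hγβ hne, sub_mem (hZ hγC) (hZ hβC)⟩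
  have hboth : γ - β ∈ AddSubmonoid.closure (C : Set V) ∧
      -(γ - β) ∈ AddSubmonoid.closure (C : Set V) := by
    rw [neg_sub]
    rcases hb.mem_closure_or_neg_mem_closure hCΔ hdiff with h | h
    · exact ⟨h, hβ.2 _ hγ.1 h⟩
    · rw [neg_sub] at h
      exact ⟨hγ.2 _ hβ.1 h, h⟩
  exact hne (sub_eq_zero.mp (hb.eq_zero_of_mem_closure_of_neg_mem_closure hCΔ hboth.1 hboth.2))

theorem exists_isHighestRoot (hb : P.IsBase Δ) (hCΔ : C ⊆ Δ) (hC : P.IsConnected C) :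
    ∃ ε, P.IsHighestRoot C ε := by
  have hrefl (γ : V) : γ - γ ∈ AddSubmonoid.closure (C : Set V) := by
    rw [sub_self]; exact zero_mem _
  have htrans (α β γ : V) (h₁ : β - α ∈ AddSubmonoid.closure (C : Set V))
      (h₂ : γ - β ∈ AddSubmonoid.closure (C : Set V)) :
      γ - α ∈ AddSubmonoid.closure (C : Set V) :=
    sub_add_sub_cancel γ β α ▸ add_mem h₂ h₁
  have hmax {α : V} (hα : α ∈ P.posRootsOf C) :
      ∃ γ, P.IsMaximalPosRoot C γ ∧ γ - α ∈ AddSubmonoid.closure (C : Set V) := by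
    obtain ⟨γ, hγ, hαγ, hγmax⟩ := Finset.exists_rel_maximal hrefl htrans _ hα
    exact ⟨γ, ⟨hγ, hγmax⟩, hαγ⟩
  obtain ⟨a, ha⟩ := hC.1
  obtain ⟨β, hβ, -⟩ := hmax (Finset.mem_filter.mpr ⟨hb.subset (hCΔ ha),
    AddSubmonoid.subset_closure ha⟩)
  refine ⟨β, hβ.1, fun α hα => ?_⟩
  rcases hb.mem_closure_or_neg_mem_closure hCΔ hα with hαC | hαC
  · obtain ⟨γ, hγ, hαγ⟩ := hmax (Finset.mem_filter.mpr ⟨(Finset.mem_filter.mp hα).1, hαC⟩)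
    rwa [hβ.eq hb hCΔ hC hγ] at hαγ
  · exact sub_eq_add_neg β α ▸ add_mem (Finset.mem_filter.mp hβ.1).2 hαC

lemma isHighestRoot_highestRoot (hb : P.IsBase Δ) (hCΔ : C ⊆ Δ) (hC : P.IsConnected C) :
    P.IsHighestRoot C (P.highestRoot C) := by
  have h := exists_isHighestRoot hb hCΔ hC
  rw [highestRoot, dif_pos h]
  exact h.choose_spec

lemma posRootsOf_mono (h : S ⊆ T) : P.posRootsOf S ⊆ P.posRootsOf T :=
  Finset.monotone_filter_right _ fun _ _ hv =>
    AddSubmonoid.closure_mono (Finset.coe_subset.mpr h) hv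

lemma IsHighestRoot.stronglyOrthogonal (hb : P.IsBase Δ) (hCΔ : C ⊆ Δ) {ε ε' : V}
    (hε : P.IsHighestRoot C ε) (hε' : ε' ∈ P.posRootsOf C) (h : P.pairInt ε' ε = 0) :
    P.StronglyOrthogonal ε ε' := by
  obtain ⟨hεR, hεC⟩ := Finset.mem_filter.mp hε.1
  obtain ⟨hε'R, hε'C⟩ := Finset.mem_filter.mp hε'
  refine (stronglyOrthogonal_iff_add_notMem hεR hε'R h).mpr fun hadd => ?_
  have hZ := AddSubmonoid.closure_le.mpr (AddSubgroup.subset_closure (k := (C : Set V)))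
  have := hε.2 _ (Finset.mem_filter.mpr ⟨hadd, add_mem (hZ hεC) (hZ hε'C)⟩)
  rw [sub_add_cancel_left] at this
  exact P.ne_zero ε' hε'R (hb.eq_zero_of_mem_closure_of_neg_mem_closure hCΔ hε'C this)

lemma stronglyOrthogonal_of_disjoint (hb : P.IsBase Δ) (hA : A ⊆ Δ) (hB : B ⊆ Δ)
    (hAB : Disjoint A B) (horth : ∀ a ∈ A, ∀ b ∈ B, P.pairInt a b = 0)
    (hx : x ∈ P.posRootsOf A) (hy : y ∈ P.posRootsOf B) : P.StronglyOrthogonal x y := by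
  obtain ⟨hxR, hxA⟩ := Finset.mem_filter.mp hx
  obtain ⟨hyR, hyB⟩ := Finset.mem_filter.mp hy
  have hAR := hA.trans hb.subset
  have hBR := hB.trans hb.subset
  have hyx : P.pairInt y x = 0 := pairInt_eq_zero_of_mem_closure hBR hxR hyR hyB fun b hb' =>
    (pairInt_eq_zero_comm (hBR hb') hxR).mpr
      (pairInt_eq_zero_of_mem_closure hAR (hBR hb') hxR hxA fun a ha => horth a ha b hb')
  exact (stronglyOrthogonal_iff_sub_notMem hxR hyR hyx).mpr
    (hb.sub_notMem_roots hA hB hAB hxA hyB (P.ne_zero x hxR) (P.ne_zero y hyR))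

lemma mem_cascadeAux_succ {n : ℕ} : K ∈ P.cascadeAux (n + 1) T ↔
    ∃ C ∈ P.components T, K = C ∨ K ∈ P.cascadeAux n (P.zeroPart C) := by
  simp only [cascadeAux, Finset.mem_biUnion, Finset.mem_insert]

lemma subset_of_mem_cascadeAux {n : ℕ} (h : K ∈ P.cascadeAux n T) : K ⊆ T := by
  induction n generalizing T K with
  | zero => simp [cascadeAux] at h
  | succ n ih =>
    obtain ⟨C, hC, rfl | hK⟩ := mem_cascadeAux_succ.mp h
    · exact subset_of_mem_components hC
    · exact (ih hK).trans ((Finset.filter_subset _ _).trans (subset_of_mem_components hC))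

lemma isConnected_of_mem_cascadeAux {n : ℕ} (hT : T ⊆ P.roots) (h : K ∈ P.cascadeAux n T) :
    P.IsConnected K := by
  induction n generalizing T K with
  | zero => simp [cascadeAux] at h
  | succ n ih =>
    obtain ⟨C, hC, rfl | hK⟩ := mem_cascadeAux_succ.mp h
    · exact isConnected_of_mem_components hT hC
    · exact ih (((Finset.filter_subset _ _).trans (subset_of_mem_components hC)).trans hT) hK

lemma isHighestRoot_of_mem_cascadeAux (hb : P.IsBase Δ) {n : ℕ} (hT : T ⊆ Δ)
    (hK : K ∈ P.cascadeAux n T) : P.IsHighestRoot K (P.highestRoot K) :=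
  isHighestRoot_highestRoot hb ((subset_of_mem_cascadeAux hK).trans hT)
    (isConnected_of_mem_cascadeAux (hT.trans hb.subset) hK)

lemma stronglyOrthogonal_of_mem_cascadeAux_zeroPart (hb : P.IsBase Δ) (hCΔ : C ⊆ Δ)
    (hC : P.IsConnected C) {n : ℕ} (hK : K ∈ P.cascadeAux n (P.zeroPart C)) :
    P.StronglyOrthogonal (P.highestRoot C) (P.highestRoot K) := by
  have hzC : P.zeroPart C ⊆ C := Finset.filter_subset _ _
  have hKz : K ⊆ P.zeroPart C := subset_of_mem_cascadeAux hK
  have hεC := isHighestRoot_highestRoot hb hCΔ hC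
  have hεK := isHighestRoot_of_mem_cascadeAux hb (hzC.trans hCΔ) hK
  refine hεC.stronglyOrthogonal hb hCΔ (posRootsOf_mono (hKz.trans hzC) hεK.1) ?_
  obtain ⟨hεKR, hεKK⟩ := Finset.mem_filter.mp hεK.1
  exact pairInt_eq_zero_of_mem_closure ((hKz.trans hzC).trans (hCΔ.trans hb.subset))
    (Finset.mem_filter.mp hεC.1).1 hεKR hεKK fun a ha => (Finset.mem_filter.mp (hKz ha)).2

theorem stronglyOrthogonal_of_mem_cascadeAux (hb : P.IsBase Δ) {n : ℕ} (hT : T ⊆ Δ)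
    (hK : K ∈ P.cascadeAux n T) (hK' : K' ∈ P.cascadeAux n T) (hne : K ≠ K') :
    P.StronglyOrthogonal (P.highestRoot K) (P.highestRoot K') := by
  induction n generalizing T K K' with
  | zero => simp [cascadeAux] at hK
  | succ n ih =>
    have hTR := hT.trans hb.subset
    obtain ⟨C, hC, hKC⟩ := mem_cascadeAux_succ.mp hK
    obtain ⟨C', hC', hK'C'⟩ := mem_cascadeAux_succ.mp hK'
    have hCΔ := (subset_of_mem_components hC).trans hT
    have hCconn := isConnected_of_mem_components hTR hC
    by_cases hCC' : C = C'
    · subst hCC'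
      rcases hKC with rfl | hKz <;> rcases hK'C' with rfl | hK'z
      · exact absurd rfl hne
      · exact stronglyOrthogonal_of_mem_cascadeAux_zeroPart hb hCΔ hCconn hK'z
      · exact (stronglyOrthogonal_of_mem_cascadeAux_zeroPart hb hCΔ hCconn hKz).symm
      · exact ih ((Finset.filter_subset _ _).trans hCΔ) hKz hK'z hne
    · have hsub {L D : Finset V} (h : L = D ∨ L ∈ P.cascadeAux n (P.zeroPart D)) : L ⊆ D :=
        h.elim (·.le) fun h => (subset_of_mem_cascadeAux h).trans (Finset.filter_subset _ _)
      exact stronglyOrthogonal_of_disjoint hb hCΔ ((subset_of_mem_components hC').trans hT)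
        (disjoint_of_mem_components hTR hC hC' hCC')
        (fun _ ha _ hb' => pairInt_eq_zero_of_mem_components hTR hC hC' hCC' ha hb')
        (posRootsOf_mono (hsub hKC) (isHighestRoot_of_mem_cascadeAux hb hT hK).1)
        (posRootsOf_mono (hsub hK'C') (isHighestRoot_of_mem_cascadeAux hb hT hK').1)

end RootSystemData

variable {k V : Type*} [Field k] [CharZero k] [AddCommGroup V] [Module k V]

/-- Let `R` be a reduced root system with base `Π` and let `S ⊆ Δ`.  If `K`
and `K'` are distinct elements of the cascade `𝒦(S)`, then `ε_K` and `ε_{K'}` are strongly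
orthogonal: neither `ε_K + ε_{K'}` nor `ε_K - ε_{K'}` is a root of `R`. -/
theorem cascade_highest_roots_strongly_orthogonal
    (P : RootSystemData k V) (Δ : Finset V) (hbase : P.IsBase Δ)
    (S : Finset V) (hS : S ⊆ Δ)
    (K : Finset V) (hK : K ∈ P.cascade S) (K' : Finset V) (hK' : K' ∈ P.cascade S)
    (hne : K ≠ K') :
    P.highestRoot K + P.highestRoot K' ∉ P.roots ∧
    P.highestRoot K - P.highestRoot K' ∉ P.roots :=
  RootSystemData.stronglyOrthogonal_of_mem_cascadeAux hbase hS hK hK' hne
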